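/- The interleaved sequence of ratios a_{2k}/a_{2k-1}, a'_{2k+1}/a'_{2k} is strictly decreasing (a_2/a_1 > a'_3/a'_2 > a_4/a_3 > a'_5/a'_4 > ⋯) and converges to α = (c₁c₂ + √(c₁²c₂² - 4c₁c₂))/(2c₂). -/

import Mathlib

/-- Chebyshev-type sequence: `cheb X n` is `P_{n-1}(X)`, with `P_{-1}=0`, `P_0=1`,
`P_k = X·P_{k-1} - P_{k-2}`. -/
def cheb (X : ℤ) : ℕ → ℤ
  | 0 => 0
  | 1 => 1
  | (n+2) => X * cheb X (n+1) - cheb X n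

/-- `seqA c X l` is `a_l`: `a_{2k} = c·P_{k-1}(X)`, `a_{2k+1} = P_k(X)+P_{k-1}(X)`. -/
def seqA (c X : ℤ) (l : ℕ) : ℤ :=
  if l % 2 = 0 then c * cheb X (l / 2) else cheb X (l / 2 + 1) + cheb X (l / 2)

/-!
With `q_k = cheb X k` and `X + 2 = c₁c₂`, the invariant `q_{k+1}² - X q_{k+1} q_k + q_k² = 1`
gives the Cassini-type identities `a_{2k+1}² = a'_{2k} a_{2k+2} + 1` and
`a_{2k+1} a_{2k+3} + 1 = a_{2k+2} a'_{2k+2}`, which say exactly that consecutive interleaved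
ratios differ by a positive amount. The odd ratios `c₁ q_{k+1} / (q_{k+1} + q_k)` are at least
`c₁ / 2`, so the sequence converges to some `L ≥ c₁ / 2`. Since
`c₂ r_{2k} r_{2k+1} = c₁ (c₂ r_{2k} - 1)`, the limit is a root of `c₂ L² - c₁c₂ L + c₁`, and the
bound `L ≥ c₁ / 2` selects the larger root `α`.
-/

open Filter Topology

theorem cheb_add_two (X : ℤ) (n : ℕ) : cheb X (n + 2) = X * cheb X (n + 1) - cheb X n := rfl

theorem cheb_succ_sq_sub_mul_add_sq (X : ℤ) (m : ℕ) :
    cheb X (m + 1) ^ 2 - X * cheb X (m + 1) * cheb X m + cheb X m ^ 2 = 1 := by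
  induction m with
  | zero => simp [cheb]
  | succ m ih => rw [cheb_add_two]; linear_combination ih

theorem sq_cheb_succ_add_cheb (X : ℤ) (m : ℕ) :
    (cheb X (m + 1) + cheb X m) ^ 2 = (X + 2) * (cheb X m * cheb X (m + 1)) + 1 := by
  linear_combination cheb_succ_sq_sub_mul_add_sq X m

theorem cheb_add_two_add_mul_add_one (X : ℤ) (m : ℕ) :
    (cheb X (m + 2) + cheb X (m + 1)) * (cheb X (m + 1) + cheb X m) + 1 =
      (X + 2) * cheb X (m + 1) ^ 2 := by
  rw [cheb_add_two]
  linear_combination (-1 : ℤ) * cheb_succ_sq_sub_mul_add_sq X m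

theorem cheb_strictMono {X : ℤ} (hX : 2 ≤ X) : StrictMono (cheb X) := by
  have hstep : ∀ m, 0 ≤ cheb X m ∧ cheb X m < cheb X (m + 1) := by
    intro m
    induction m with
    | zero => simp [cheb]
    | succ m ih =>
      obtain ⟨hnonneg, hlt⟩ := ih
      refine ⟨by linarith, ?_⟩
      rw [cheb_add_two]
      nlinarith
  exact strictMono_nat_of_lt_succ fun m => (hstep m).2

theorem cheb_pos {X : ℤ} (hX : 2 ≤ X) {k : ℕ} (hk : 0 < k) : 0 < cheb X k :=
  cheb_strictMono hX hk

theorem cheb_nonneg {X : ℤ} (hX : 2 ≤ X) (k : ℕ) : 0 ≤ cheb X k :=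
  (cheb_strictMono hX).monotone k.zero_le

theorem seqA_two_mul (c X : ℤ) (k : ℕ) : seqA c X (2 * k) = c * cheb X k := by
  simp [seqA]

theorem seqA_two_mul_add_one (c X : ℤ) (k : ℕ) :
    seqA c X (2 * k + 1) = cheb X (k + 1) + cheb X k := by
  have hmod : (2 * k + 1) % 2 = 1 := by omega
  have hdiv : (2 * k + 1) / 2 = k := by omega
  simp [seqA, hmod, hdiv]

noncomputable def interleavedRatio (c₁ c₂ : ℤ) (n : ℕ) : ℝ :=
  if n % 2 = 1 then (seqA c₁ (c₁ * c₂ - 2) (n + 1) : ℝ) / (seqA c₁ (c₁ * c₂ - 2) n : ℝ)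
  else (seqA c₂ (c₁ * c₂ - 2) (n + 1) : ℝ) / (seqA c₂ (c₁ * c₂ - 2) n : ℝ)

section interleavedRatio

variable {c₁ c₂ : ℤ}

theorem interleavedRatio_two_mul (k : ℕ) :
    interleavedRatio c₁ c₂ (2 * k) =
      ((cheb (c₁ * c₂ - 2) (k + 1) : ℝ) + cheb (c₁ * c₂ - 2) k) /
        (c₂ * cheb (c₁ * c₂ - 2) k) := by
  rw [interleavedRatio, if_neg (by omega), seqA_two_mul_add_one, seqA_two_mul]
  push_cast
  rfl

theorem interleavedRatio_two_mul_add_one (k : ℕ) :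
    interleavedRatio c₁ c₂ (2 * k + 1) =
      c₁ * (cheb (c₁ * c₂ - 2) (k + 1) : ℝ) /
        ((cheb (c₁ * c₂ - 2) (k + 1) : ℝ) + cheb (c₁ * c₂ - 2) k) := by
  rw [interleavedRatio, if_pos (by omega), show 2 * k + 1 + 1 = 2 * (k + 1) by ring,
    seqA_two_mul, seqA_two_mul_add_one]
  push_cast
  rfl

theorem interleavedRatio_two_mul_add_one_lt (h₂ : 0 < c₂) (h4 : 4 ≤ c₁ * c₂) {k : ℕ}
    (hk : 1 ≤ k) : interleavedRatio c₁ c₂ (2 * k + 1) < interleavedRatio c₁ c₂ (2 * k) := by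
  rw [interleavedRatio_two_mul_add_one, interleavedRatio_two_mul]
  set X := c₁ * c₂ - 2 with hXdef
  have hX : 2 ≤ X := by omega
  have hq : (0 : ℝ) < cheb X k := by exact_mod_cast cheb_pos hX hk
  have hq' : (0 : ℝ) < cheb X (k + 1) := by exact_mod_cast cheb_pos hX k.succ_pos
  have hc₂ : (0 : ℝ) < c₂ := by exact_mod_cast h₂
  rw [div_lt_div_iff₀ (by positivity) (by positivity)]
  have hcross : c₁ * cheb X (k + 1) * (c₂ * cheb X k) <
      (cheb X (k + 1) + cheb X k) * (cheb X (k + 1) + cheb X k) := by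
    have := sq_cheb_succ_add_cheb X k
    rw [show X + 2 = c₁ * c₂ by omega] at this
    linarith
  exact_mod_cast hcross

theorem interleavedRatio_two_mul_add_two_lt (h₂ : 0 < c₂) (h4 : 4 ≤ c₁ * c₂) (k : ℕ) :
    interleavedRatio c₁ c₂ (2 * k + 2) < interleavedRatio c₁ c₂ (2 * k + 1) := by
  rw [show 2 * k + 2 = 2 * (k + 1) by ring, interleavedRatio_two_mul,
    interleavedRatio_two_mul_add_one]
  set X := c₁ * c₂ - 2 with hXdef
  have hX : 2 ≤ X := by omega
  have hq : (0 : ℝ) ≤ cheb X k := by exact_mod_cast cheb_nonneg hX k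
  have hq' : (0 : ℝ) < cheb X (k + 1) := by exact_mod_cast cheb_pos hX k.succ_pos
  have hc₂ : (0 : ℝ) < c₂ := by exact_mod_cast h₂
  rw [div_lt_div_iff₀ (by positivity) (by positivity)]
  have hcross : (cheb X (k + 2) + cheb X (k + 1)) * (cheb X (k + 1) + cheb X k) <
      c₁ * cheb X (k + 1) * (c₂ * cheb X (k + 1)) := by
    have := cheb_add_two_add_mul_add_one X k
    rw [show X + 2 = c₁ * c₂ by omega] at this
    linarith
  exact_mod_cast hcross

theorem interleavedRatio_succ_lt (h₂ : 0 < c₂) (h4 : 4 ≤ c₁ * c₂) {n : ℕ} (hn : 1 ≤ n) :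
    interleavedRatio c₁ c₂ (n + 1) < interleavedRatio c₁ c₂ n := by
  obtain ⟨k, rfl | rfl⟩ := n.even_or_odd'
  · exact interleavedRatio_two_mul_add_one_lt h₂ h4 (by omega)
  · exact interleavedRatio_two_mul_add_two_lt h₂ h4 k

theorem half_le_interleavedRatio_two_mul_add_one (h₁ : 0 < c₁) (h4 : 4 ≤ c₁ * c₂) (k : ℕ) :
    (c₁ : ℝ) / 2 ≤ interleavedRatio c₁ c₂ (2 * k + 1) := by
  rw [interleavedRatio_two_mul_add_one]
  set X := c₁ * c₂ - 2 with hXdef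
  have hX : 2 ≤ X := by omega
  have hle : (cheb X k : ℝ) ≤ cheb X (k + 1) := by
    exact_mod_cast (cheb_strictMono hX).monotone k.le_succ
  have hq : (0 : ℝ) ≤ cheb X k := by exact_mod_cast cheb_nonneg hX k
  have hq' : (0 : ℝ) < cheb X (k + 1) := by exact_mod_cast cheb_pos hX k.succ_pos
  have hc₁ : (0 : ℝ) < c₁ := by exact_mod_cast h₁
  rw [le_div_iff₀ (by linarith)]
  nlinarith [mul_le_mul_of_nonneg_left hle hc₁.le]

theorem half_le_interleavedRatio (h₁ : 0 < c₁) (h₂ : 0 < c₂) (h4 : 4 ≤ c₁ * c₂) {n : ℕ}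
    (hn : 1 ≤ n) : (c₁ : ℝ) / 2 ≤ interleavedRatio c₁ c₂ n := by
  obtain ⟨k, rfl | rfl⟩ := n.even_or_odd'
  · exact (half_le_interleavedRatio_two_mul_add_one h₁ h4 k).trans
      (interleavedRatio_two_mul_add_one_lt h₂ h4 (by omega)).le
  · exact half_le_interleavedRatio_two_mul_add_one h₁ h4 k

theorem exists_tendsto_interleavedRatio (h₁ : 0 < c₁) (h₂ : 0 < c₂) (h4 : 4 ≤ c₁ * c₂) :
    ∃ L, Tendsto (interleavedRatio c₁ c₂) atTop (𝓝 L) ∧ (c₁ : ℝ) / 2 ≤ L := by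
  have hanti : Antitone fun n => interleavedRatio c₁ c₂ (n + 1) :=
    antitone_nat_of_succ_le fun n => (interleavedRatio_succ_lt h₂ h4 (by omega)).le
  have hbound : ∀ n, (c₁ : ℝ) / 2 ≤ interleavedRatio c₁ c₂ (n + 1) :=
    fun n => half_le_interleavedRatio h₁ h₂ h4 (by omega)
  exact ⟨_, (tendsto_add_atTop_iff_nat 1).mp (tendsto_atTop_ciInf hanti ⟨_, by
    rintro _ ⟨n, rfl⟩; exact hbound n⟩), le_ciInf hbound⟩

theorem interleavedRatio_two_mul_mul_two_mul_add_one (h₂ : 0 < c₂) (h4 : 4 ≤ c₁ * c₂) {k : ℕ}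
    (hk : 1 ≤ k) :
    c₂ * interleavedRatio c₁ c₂ (2 * k) * interleavedRatio c₁ c₂ (2 * k + 1) =
      c₁ * (c₂ * interleavedRatio c₁ c₂ (2 * k) - 1) := by
  rw [interleavedRatio_two_mul_add_one, interleavedRatio_two_mul]
  set X := c₁ * c₂ - 2 with hXdef
  have hX : 2 ≤ X := by omega
  have hq : (0 : ℝ) < cheb X k := by exact_mod_cast cheb_pos hX hk
  have hq' : (0 : ℝ) < cheb X (k + 1) := by exact_mod_cast cheb_pos hX k.succ_pos
  have hc₂ : (0 : ℝ) < c₂ := by exact_mod_cast h₂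
  have hsum : (0 : ℝ) < cheb X (k + 1) + cheb X k := by linarith
  field_simp
  ring

theorem quadratic_eq_zero_of_tendsto_interleavedRatio (h₂ : 0 < c₂) (h4 : 4 ≤ c₁ * c₂) {L : ℝ}
    (hL : Tendsto (interleavedRatio c₁ c₂) atTop (𝓝 L)) : c₂ * L ^ 2 - c₁ * c₂ * L + c₁ = 0 := by
  have hEven := hL.comp (tendsto_atTop_mono (fun k => by dsimp; omega) tendsto_id :
    Tendsto (fun k : ℕ => 2 * k) atTop atTop)
  have hOdd := hL.comp (tendsto_atTop_mono (fun k => by dsimp; omega) tendsto_id :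
    Tendsto (fun k : ℕ => 2 * k + 1) atTop atTop)
  have hfixed : c₂ * L * L = c₁ * (c₂ * L - 1) := by
    refine tendsto_nhds_unique ((tendsto_const_nhds.mul hEven).mul hOdd) ?_
    refine (tendsto_const_nhds.mul ((tendsto_const_nhds.mul hEven).sub
      tendsto_const_nhds)).congr' ?_
    filter_upwards [eventually_ge_atTop 1] with k hk
    exact (interleavedRatio_two_mul_mul_two_mul_add_one h₂ h4 hk).symm
  linear_combination hfixed

end interleavedRatio

theorem eq_add_sqrt_div_of_mul_sq_sub_add_eq_zero {a b L : ℝ} (hb : 0 < b)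
    (hL : b * L ^ 2 - a * b * L + a = 0) (hLa : a / 2 ≤ L) :
    L = (a * b + √(a ^ 2 * b ^ 2 - 4 * (a * b))) / (2 * b) := by
  have hnonneg : 0 ≤ 2 * b * L - a * b := by nlinarith
  have hdisc : a ^ 2 * b ^ 2 - 4 * (a * b) = (2 * b * L - a * b) ^ 2 := by
    linear_combination (-4 * b) * hL
  rw [hdisc, Real.sqrt_sq hnonneg]
  field_simp
  ring

/-- The interleaved ratio sequence `a_2/a_1 > a'_3/a'_2 > a_4/a_3 > a'_5/a'_4 > ⋯`
is strictly decreasing and converges to `α = (c₁c₂ + √(c₁²c₂² - 4c₁c₂))/(2c₂)`.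
Here the `n`-th term (n ≥ 1) is `a_{n+1}/a_n` if `n` is odd and `a'_{n+1}/a'_n` if `n` is even. -/
theorem interleaved_ratios_decreasing_tendsto (c₁ c₂ : ℤ) (h₁ : 0 < c₁) (h₂ : 0 < c₂)
    (h4 : 4 ≤ c₁ * c₂) :
    let a : ℕ → ℤ := seqA c₁ (c₁ * c₂ - 2)
    let a' : ℕ → ℤ := seqA c₂ (c₁ * c₂ - 2)
    let r : ℕ → ℝ := fun n =>
      if n % 2 = 1 then (a (n + 1) : ℝ) / (a n : ℝ) else (a' (n + 1) : ℝ) / (a' n : ℝ)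
    (∀ n : ℕ, 1 ≤ n → r (n + 1) < r n) ∧
      Filter.Tendsto r Filter.atTop
        (nhds (((c₁ : ℝ) * c₂ + Real.sqrt ((c₁ : ℝ) ^ 2 * (c₂ : ℝ) ^ 2 - 4 * ((c₁ : ℝ) * c₂)))
          / (2 * (c₂ : ℝ)))) := by
  intro a a' r
  refine ⟨fun n hn => interleavedRatio_succ_lt h₂ h4 hn, ?_⟩
  obtain ⟨L, hL, hL₁⟩ := exists_tendsto_interleavedRatio h₁ h₂ h4
  have hc₂ : (0 : ℝ) < c₂ := by exact_mod_cast h₂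
  rw [← eq_add_sqrt_div_of_mul_sq_sub_add_eq_zero hc₂
    (quadratic_eq_zero_of_tendsto_interleavedRatio h₂ h4 hL) hL₁]
  exact hL
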